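/- arXiv:2301.04080 — 7 statements merged into one kernel-verified Lean document; each statement's English description precedes it below -/
import Mathlib

section
/- For every nonzero integer n: ν_n^h ≠ 0, ν_n^p ≠ 0, ν_n^h ≠ iūn and ν_n^p ≠ iūn (so ν₂ⁿ ≠ ū and ν₁ⁿ ≠ ū); moreover the nonzero vector (ρ̄, ν₂ⁿ − ū) satisfies R_n·(ρ̄, ν₂ⁿ − ū)ᵀ = ν_n^h·(ρ̄, ν₂ⁿ − ū)ᵀ, and the nonzero vector (ρ̄/(ν₁ⁿ − ū), 1) satisfies R_n·(ρ̄/(ν₁ⁿ − ū), 1)ᵀ = ν_n^p·(ρ̄/(ν₁ⁿ − ū), 1)ᵀ. In other words, 0 and iūn are never eigenvalues of R_n, and these vectors are eigenvectors of R_n for the eigenvalues ν_n^h and ν_n^p respectively. -/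
/-! Shifting by `iūn`, the characteristic polynomial of `R_n` becomes
`w² + μ₀n²w + bρ̄n²` in `w = ν - iūn`, and `ν_n^h - iūn`, `ν_n^p - iūn` are exactly its two roots by
the quadratic formula, so `ν_n^h`, `ν_n^p` are eigenvalues of `R_n`. They differ from `iūn` because
the constant term `bρ̄n²` is nonzero, and from `0` because `det R_n` has imaginary part
`-μ₀ūn³ ≠ 0`. For an eigenvalue `ν` of a `2 × 2` matrix `A` with `A₀₁ ≠ 0`, every vector `(x, y)`
with `A₀₁ y = (ν - A₀₀) x` is an eigenvector, and both vectors of the statement have this form. -/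

open scoped Classical
open Complex

/-- The hyperbolic branch of eigenvalues of the adjoint operator of the linearized
barotropic compressible Navier–Stokes system. -/
noncomputable def nuH (ρ u b μ : ℝ) (n : ℤ) : ℂ :=
  if 4 * b * ρ ≤ μ ^ 2 * (n : ℝ) ^ 2 then
    (((-(μ * (n : ℝ) ^ 2) + |(n : ℝ)| * Real.sqrt (μ ^ 2 * (n : ℝ) ^ 2 - 4 * b * ρ)) / 2 : ℝ) : ℂ)
      + Complex.I * ((u * (n : ℝ) : ℝ) : ℂ)
  else
    ((-(μ * (n : ℝ) ^ 2) / 2 : ℝ) : ℂ)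
      + Complex.I * ((u * (n : ℝ) + (n : ℝ) / 2 * Real.sqrt (4 * b * ρ - μ ^ 2 * (n : ℝ) ^ 2) : ℝ) : ℂ)

/-- The parabolic branch of eigenvalues. -/
noncomputable def nuP (ρ u b μ : ℝ) (n : ℤ) : ℂ :=
  if 4 * b * ρ ≤ μ ^ 2 * (n : ℝ) ^ 2 then
    (((-(μ * (n : ℝ) ^ 2) - |(n : ℝ)| * Real.sqrt (μ ^ 2 * (n : ℝ) ^ 2 - 4 * b * ρ)) / 2 : ℝ) : ℂ)
      + Complex.I * ((u * (n : ℝ) : ℝ) : ℂ)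
  else
    ((-(μ * (n : ℝ) ^ 2) / 2 : ℝ) : ℂ)
      + Complex.I * ((u * (n : ℝ) - (n : ℝ) / 2 * Real.sqrt (4 * b * ρ - μ ^ 2 * (n : ℝ) ^ 2) : ℝ) : ℂ)

/-- `ν₁ⁿ := ν_n^p / (i n)`. -/
noncomputable def nu1 (ρ u b μ : ℝ) (n : ℤ) : ℂ := nuP ρ u b μ n / (Complex.I * (n : ℂ))

/-- `ν₂ⁿ := ν_n^h / (i n)`. -/
noncomputable def nu2 (ρ u b μ : ℝ) (n : ℤ) : ℂ := nuH ρ u b μ n / (Complex.I * (n : ℂ))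

/-- The matrix `R_n`: first row `(iūn, iρ̄n)`, second row `(ibn, −μ₀n² + iūn)`. -/
noncomputable def Rmat (ρ u b μ : ℝ) (n : ℤ) : Matrix (Fin 2) (Fin 2) ℂ :=
  !![Complex.I * (u : ℂ) * (n : ℂ), Complex.I * (ρ : ℂ) * (n : ℂ);
     Complex.I * (b : ℂ) * (n : ℂ), -(μ : ℂ) * (n : ℂ) ^ 2 + Complex.I * (u : ℂ) * (n : ℂ)]

open Polynomial

namespace Matrix

variable {K : Type*} [Field K]

lemma charpoly_eval_fin_two (A : Matrix (Fin 2) (Fin 2) K) (ν : K) :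
    A.charpoly.eval ν = (ν - A 0 0) * (ν - A 1 1) - A 0 1 * A 1 0 := by
  rw [charpoly_fin_two, trace_fin_two, det_fin_two]
  simp only [eval_add, eval_sub, eval_mul, eval_pow, eval_X, eval_C]
  ring

lemma ne_zero_of_isRoot_charpoly {ι : Type*} [Fintype ι] [DecidableEq ι] (A : Matrix ι ι K)
    (hA : A.det ≠ 0) {ν : K} (hν : A.charpoly.IsRoot ν) : ν ≠ 0 := by
  rintro rfl
  exact (spectrum.zero_mem_iff K).1 (mem_spectrum_iff_isRoot_charpoly.2 hν)
    ((isUnit_iff_isUnit_det A).2 hA.isUnit)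

lemma ne_of_isRoot_charpoly_fin_two (A : Matrix (Fin 2) (Fin 2) K) (hA : A 0 1 * A 1 0 ≠ 0)
    {ν : K} (hν : A.charpoly.IsRoot ν) : ν ≠ A 0 0 := by
  rintro rfl
  apply hA
  simpa [charpoly_eval_fin_two] using hν.eq_zero

/-- The first row of `A - ν` is orthogonal to `(x, y)`; the second row is then too, because
`A - ν` is singular and its first row is nonzero. -/
lemma mulVec_eq_smul_of_isRoot_charpoly (A : Matrix (Fin 2) (Fin 2) K) {ν : K}
    (hν : A.charpoly.IsRoot ν) (hA : A 0 1 ≠ 0) {x y : K}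
    (hxy : A 0 1 * y = (ν - A 0 0) * x) :
    A *ᵥ ![x, y] = ν • ![x, y] := by
  have hdet := hν.eq_zero
  rw [charpoly_eval_fin_two] at hdet
  ext i
  fin_cases i <;> simp only [mulVec, dotProduct, Fin.sum_univ_two, Fin.zero_eta, Fin.mk_one,
    cons_val_zero, cons_val_one, Pi.smul_apply, smul_eq_mul]
  · linear_combination hxy
  · refine mul_left_cancel₀ hA ?_
    linear_combination (-x) * hdet + (A 1 1 - ν) * hxy

end Matrix

section Rmat

variable (ρ u b μ : ℝ) (n : ℤ)

/-- A square root of the discriminant `μ²n⁴ - 4bρn²` of the characteristic polynomial of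
`R_n - iūn`, chosen so that `ν_n^h` and `ν_n^p` are the two roots given by the quadratic formula. -/
noncomputable def discRoot : ℂ :=
  if 4 * b * ρ ≤ μ ^ 2 * (n : ℝ) ^ 2 then
    ((|(n : ℝ)| * Real.sqrt (μ ^ 2 * (n : ℝ) ^ 2 - 4 * b * ρ) : ℝ) : ℂ)
  else
    Complex.I * (((n : ℝ) * Real.sqrt (4 * b * ρ - μ ^ 2 * (n : ℝ) ^ 2) : ℝ) : ℂ)

lemma discrim_eq_discRoot_mul_self :
    discrim 1 ((μ : ℂ) * (n : ℂ) ^ 2) ((b : ℂ) * (ρ : ℂ) * (n : ℂ) ^ 2)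
      = discRoot ρ b μ n * discRoot ρ b μ n := by
  rw [discrim, discRoot]
  split_ifs with h
  · have hs := Real.mul_self_sqrt (sub_nonneg.2 h)
    have habs := abs_mul_abs_self (n : ℝ)
    apply_fun ((↑) : ℝ → ℂ) at hs habs
    push_cast at hs habs ⊢
    linear_combination -(((Real.sqrt (μ ^ 2 * (n : ℝ) ^ 2 - 4 * b * ρ) : ℝ) : ℂ) ^ 2) * habs
      - (n : ℂ) ^ 2 * hs
  · have hs := Real.mul_self_sqrt (sub_nonneg.2 (not_le.1 h).le)
    apply_fun ((↑) : ℝ → ℂ) at hs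
    push_cast at hs ⊢
    linear_combination (n : ℂ) ^ 2 * hs
      - (n : ℂ) ^ 2 * ((Real.sqrt (4 * b * ρ - μ ^ 2 * (n : ℝ) ^ 2) : ℝ) : ℂ) ^ 2 * Complex.I_sq

lemma nuH_eq :
    nuH ρ u b μ n = Complex.I * u * n + (-((μ : ℂ) * (n : ℂ) ^ 2) + discRoot ρ b μ n) / 2 := by
  rw [nuH, discRoot]
  split_ifs <;> push_cast <;> ring

lemma nuP_eq :
    nuP ρ u b μ n = Complex.I * u * n + (-((μ : ℂ) * (n : ℂ) ^ 2) - discRoot ρ b μ n) / 2 := by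
  rw [nuP, discRoot]
  split_ifs <;> push_cast <;> ring

lemma Rmat_charpoly_eval (ν : ℂ) :
    (Rmat ρ u b μ n).charpoly.eval ν
      = 1 * ((ν - Complex.I * u * n) * (ν - Complex.I * u * n))
        + (μ : ℂ) * (n : ℂ) ^ 2 * (ν - Complex.I * u * n) + (b : ℂ) * (ρ : ℂ) * (n : ℂ) ^ 2 := by
  rw [Matrix.charpoly_eval_fin_two]
  simp only [Rmat, Matrix.of_apply, Matrix.cons_val', Matrix.cons_val_zero, Matrix.cons_val_one,
    Matrix.empty_val', Matrix.cons_val_fin_one]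
  linear_combination -(b : ℂ) * (ρ : ℂ) * (n : ℂ) ^ 2 * Complex.I_sq

lemma isRoot_charpoly_Rmat_iff (ν : ℂ) :
    (Rmat ρ u b μ n).charpoly.IsRoot ν ↔ ν = nuH ρ u b μ n ∨ ν = nuP ρ u b μ n := by
  rw [Polynomial.IsRoot, Rmat_charpoly_eval,
    quadratic_eq_zero_iff one_ne_zero (discrim_eq_discRoot_mul_self ρ b μ n), nuH_eq, nuP_eq]
  constructor <;> rintro (h | h) <;> [left; right; left; right] <;> linear_combination h

lemma isRoot_charpoly_Rmat_nuH : (Rmat ρ u b μ n).charpoly.IsRoot (nuH ρ u b μ n) :=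
  (isRoot_charpoly_Rmat_iff ρ u b μ n _).2 (Or.inl rfl)

lemma isRoot_charpoly_Rmat_nuP : (Rmat ρ u b μ n).charpoly.IsRoot (nuP ρ u b μ n) :=
  (isRoot_charpoly_Rmat_iff ρ u b μ n _).2 (Or.inr rfl)

variable {ρ u b μ n}

lemma Rmat_det_ne_zero (hu : u ≠ 0) (hμ : μ ≠ 0) (hn : n ≠ 0) : (Rmat ρ u b μ n).det ≠ 0 := by
  intro h
  have him := congrArg Complex.im h
  simp [Rmat, Matrix.det_fin_two_of, sq, hu, hμ, hn] at him

lemma Rmat_offDiag_mul_ne_zero (hρ : ρ ≠ 0) (hb : b ≠ 0) (hn : n ≠ 0) :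
    Rmat ρ u b μ n 0 1 * Rmat ρ u b μ n 1 0 ≠ 0 := by
  simp [Rmat, hρ, hb, hn]

end Rmat

/-- For every nonzero integer `n`: `ν_n^h`, `ν_n^p` are nonzero and different from `iūn`
(so `ν₂ⁿ ≠ ū` and `ν₁ⁿ ≠ ū`), and the nonzero vectors `(ρ̄, ν₂ⁿ − ū)` and
`(ρ̄/(ν₁ⁿ − ū), 1)` are eigenvectors of `R_n` for the eigenvalues `ν_n^h` and `ν_n^p`. -/
theorem eigenvectors_of_Rmat (ρ u b μ : ℝ) (hρ : 0 < ρ) (hu : 0 < u) (hb : 0 < b) (hμ : 0 < μ)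
    (n : ℤ) (hn : n ≠ 0) :
    nuH ρ u b μ n ≠ 0 ∧ nuP ρ u b μ n ≠ 0 ∧
    nuH ρ u b μ n ≠ Complex.I * (u : ℂ) * (n : ℂ) ∧
    nuP ρ u b μ n ≠ Complex.I * (u : ℂ) * (n : ℂ) ∧
    nu2 ρ u b μ n ≠ (u : ℂ) ∧ nu1 ρ u b μ n ≠ (u : ℂ) ∧
    (![(ρ : ℂ), nu2 ρ u b μ n - (u : ℂ)] : Fin 2 → ℂ) ≠ 0 ∧
    (Rmat ρ u b μ n).mulVec ![(ρ : ℂ), nu2 ρ u b μ n - (u : ℂ)]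
      = nuH ρ u b μ n • ![(ρ : ℂ), nu2 ρ u b μ n - (u : ℂ)] ∧
    (![(ρ : ℂ) / (nu1 ρ u b μ n - (u : ℂ)), 1] : Fin 2 → ℂ) ≠ 0 ∧
    (Rmat ρ u b μ n).mulVec ![(ρ : ℂ) / (nu1 ρ u b μ n - (u : ℂ)), 1]
      = nuP ρ u b μ n • ![(ρ : ℂ) / (nu1 ρ u b μ n - (u : ℂ)), 1] := by
  have hin : Complex.I * (n : ℂ) ≠ 0 := by simp [hn]
  have hH := isRoot_charpoly_Rmat_nuH ρ u b μ n
  have hP := isRoot_charpoly_Rmat_nuP ρ u b μ n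
  have hdet := Rmat_det_ne_zero (ρ := ρ) (b := b) hu.ne' hμ.ne' hn
  have hoff := Rmat_offDiag_mul_ne_zero (u := u) (μ := μ) hρ.ne' hb.ne' hn
  have hH₀ : nuH ρ u b μ n - Complex.I * u * n ≠ 0 :=
    sub_ne_zero.2 (Matrix.ne_of_isRoot_charpoly_fin_two _ hoff hH)
  have hP₀ : nuP ρ u b μ n - Complex.I * u * n ≠ 0 :=
    sub_ne_zero.2 (Matrix.ne_of_isRoot_charpoly_fin_two _ hoff hP)
  have hnu2 : nu2 ρ u b μ n - u = (nuH ρ u b μ n - Complex.I * u * n) / (Complex.I * n) := by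
    rw [nu2]; field_simp
  have hnu1 : nu1 ρ u b μ n - u = (nuP ρ u b μ n - Complex.I * u * n) / (Complex.I * n) := by
    rw [nu1]; field_simp
  refine ⟨Matrix.ne_zero_of_isRoot_charpoly _ hdet hH, Matrix.ne_zero_of_isRoot_charpoly _ hdet hP,
    sub_ne_zero.1 hH₀, sub_ne_zero.1 hP₀, sub_ne_zero.1 (hnu2 ▸ div_ne_zero hH₀ hin),
    sub_ne_zero.1 (hnu1 ▸ div_ne_zero hP₀ hin), fun h ↦ hρ.ne' (by simpa using congrFun h 0),
    Matrix.mulVec_eq_smul_of_isRoot_charpoly _ hH (left_ne_zero_of_mul hoff) ?_,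
    fun h ↦ by simpa using congrFun h 1,
    Matrix.mulVec_eq_smul_of_isRoot_charpoly _ hP (left_ne_zero_of_mul hoff) ?_⟩
  all_goals
    simp only [hnu1, hnu2, Rmat, Matrix.of_apply, Matrix.cons_val', Matrix.cons_val_zero,
      Matrix.cons_val_one, Matrix.empty_val', Matrix.cons_val_fin_one]
  · field_simp
  · rw [div_div_eq_mul_div, mul_div_cancel₀ _ hP₀]
    ring
end

section
/- Let n and l be nonzero integers. (a) If μ₀²n² = 4bρ̄ then ν_n^h = ν_n^p = −μ₀n²/2 + iūn (the two branches of eigenvalues merge). (b) If μ₀²n² > 4bρ̄ and μ₀²l² > 4bρ̄, then ν_n^h ≠ ν_l^p. (c) If μ₀²n² < 4bρ̄ and μ₀²l² < 4bρ̄, then ν_n^h ≠ ν_l^p. -/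
open scoped Classical
open Complex

/-!
When `μ²n² ≥ 4bρ` both eigenvalues have imaginary part `un`, so `ν_n^h = ν_l^p` forces
`n = l`, and then the real parts differ by `|n|√(μ²n² − 4bρ) > 0`. When `μ²n² < 4bρ` both
have real part `−μn²/2`, so `n = ±l`: for `n = l` the imaginary parts differ by
`n√(4bρ − μ²n²) ≠ 0`, for `n = −l` by `2un ≠ 0`.
-/

variable {ρ u b μ : ℝ} {n : ℤ}

theorem nuH_re_of_le (h : 4 * b * ρ ≤ μ ^ 2 * (n : ℝ) ^ 2) :
    (nuH ρ u b μ n).re =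
      (-(μ * (n : ℝ) ^ 2) + |(n : ℝ)| * √(μ ^ 2 * (n : ℝ) ^ 2 - 4 * b * ρ)) / 2 := by
  rw [nuH, if_pos h, add_re, ofReal_re, I_mul_re, ofReal_im, neg_zero, add_zero]

theorem nuH_im_of_le (h : 4 * b * ρ ≤ μ ^ 2 * (n : ℝ) ^ 2) :
    (nuH ρ u b μ n).im = u * n := by
  rw [nuH, if_pos h, add_im, ofReal_im, I_mul_im, ofReal_re, zero_add]

theorem nuP_re_of_le (h : 4 * b * ρ ≤ μ ^ 2 * (n : ℝ) ^ 2) :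
    (nuP ρ u b μ n).re =
      (-(μ * (n : ℝ) ^ 2) - |(n : ℝ)| * √(μ ^ 2 * (n : ℝ) ^ 2 - 4 * b * ρ)) / 2 := by
  rw [nuP, if_pos h, add_re, ofReal_re, I_mul_re, ofReal_im, neg_zero, add_zero]

theorem nuP_im_of_le (h : 4 * b * ρ ≤ μ ^ 2 * (n : ℝ) ^ 2) :
    (nuP ρ u b μ n).im = u * n := by
  rw [nuP, if_pos h, add_im, ofReal_im, I_mul_im, ofReal_re, zero_add]

theorem nuH_re_of_lt (h : μ ^ 2 * (n : ℝ) ^ 2 < 4 * b * ρ) :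
    (nuH ρ u b μ n).re = -(μ * (n : ℝ) ^ 2) / 2 := by
  rw [nuH, if_neg h.not_ge, add_re, ofReal_re, I_mul_re, ofReal_im, neg_zero, add_zero]

theorem nuH_im_of_lt (h : μ ^ 2 * (n : ℝ) ^ 2 < 4 * b * ρ) :
    (nuH ρ u b μ n).im = u * n + n / 2 * √(4 * b * ρ - μ ^ 2 * (n : ℝ) ^ 2) := by
  rw [nuH, if_neg h.not_ge, add_im, ofReal_im, I_mul_im, ofReal_re, zero_add]

theorem nuP_re_of_lt (h : μ ^ 2 * (n : ℝ) ^ 2 < 4 * b * ρ) :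
    (nuP ρ u b μ n).re = -(μ * (n : ℝ) ^ 2) / 2 := by
  rw [nuP, if_neg h.not_ge, add_re, ofReal_re, I_mul_re, ofReal_im, neg_zero, add_zero]

theorem nuP_im_of_lt (h : μ ^ 2 * (n : ℝ) ^ 2 < 4 * b * ρ) :
    (nuP ρ u b μ n).im = u * n - n / 2 * √(4 * b * ρ - μ ^ 2 * (n : ℝ) ^ 2) := by
  rw [nuP, if_neg h.not_ge, add_im, ofReal_im, I_mul_im, ofReal_re, zero_add]

theorem nuH_eq_nuP_of_eq (h : μ ^ 2 * (n : ℝ) ^ 2 = 4 * b * ρ) :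
    nuH ρ u b μ n = nuP ρ u b μ n := by
  apply Complex.ext
  · rw [nuH_re_of_le h.ge, nuP_re_of_le h.ge, h, sub_self, Real.sqrt_zero]
    ring
  · rw [nuH_im_of_le h.ge, nuP_im_of_le h.ge]

theorem nuH_of_eq (h : μ ^ 2 * (n : ℝ) ^ 2 = 4 * b * ρ) :
    nuH ρ u b μ n = ((-(μ * (n : ℝ) ^ 2) / 2 : ℝ) : ℂ) + I * u * n := by
  rw [nuH, if_pos h.ge, h, sub_self, Real.sqrt_zero]
  push_cast
  ring

theorem nuH_ne_nuP_of_lt_of_le (hu : u ≠ 0) (hn : n ≠ 0) {l : ℤ}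
    (hn2 : 4 * b * ρ < μ ^ 2 * (n : ℝ) ^ 2) (hl2 : 4 * b * ρ ≤ μ ^ 2 * (l : ℝ) ^ 2) :
    nuH ρ u b μ n ≠ nuP ρ u b μ l := by
  intro h
  have him := congrArg Complex.im h
  rw [nuH_im_of_le hn2.le, nuP_im_of_le hl2] at him
  have hnl : (n : ℝ) = l := mul_left_cancel₀ hu him
  have hre := congrArg Complex.re h
  rw [nuH_re_of_le hn2.le, nuP_re_of_le hl2, ← hnl] at hre
  have hpos : 0 < |(n : ℝ)| * √(μ ^ 2 * (n : ℝ) ^ 2 - 4 * b * ρ) :=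
    mul_pos (abs_pos.2 (Int.cast_ne_zero.2 hn)) (Real.sqrt_pos.2 (sub_pos.2 hn2))
  linarith

theorem nuH_ne_nuP_of_lt_of_lt (hμ : μ ≠ 0) (hu : u ≠ 0) (hn : n ≠ 0) {l : ℤ}
    (hn2 : μ ^ 2 * (n : ℝ) ^ 2 < 4 * b * ρ) (hl2 : μ ^ 2 * (l : ℝ) ^ 2 < 4 * b * ρ) :
    nuH ρ u b μ n ≠ nuP ρ u b μ l := by
  intro h
  have hre := congrArg Complex.re h
  rw [nuH_re_of_lt hn2, nuP_re_of_lt hl2] at hre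
  have hsq : (n : ℝ) ^ 2 = (l : ℝ) ^ 2 := mul_left_cancel₀ hμ (by linarith)
  have him := congrArg Complex.im h
  rw [nuH_im_of_lt hn2, nuP_im_of_lt hl2, ← hsq] at him
  have hnR : (n : ℝ) ≠ 0 := Int.cast_ne_zero.2 hn
  rcases sq_eq_sq_iff_eq_or_eq_neg.1 hsq with hnl | hnl
  · have hs : √(4 * b * ρ - μ ^ 2 * (n : ℝ) ^ 2) ≠ 0 :=
      (Real.sqrt_pos.2 (sub_pos.2 hn2)).ne'
    have : (n : ℝ) * √(4 * b * ρ - μ ^ 2 * (n : ℝ) ^ 2) = 0 := by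
      rw [← hnl] at him
      linarith
    exact mul_ne_zero hnR hs this
  · have : 2 * u * (n : ℝ) = 0 := by
      rw [hnl] at him ⊢
      linarith
    exact mul_ne_zero (mul_ne_zero two_ne_zero hu) hnR this

theorem hyperbolic_vs_parabolic_general (ρ u b μ : ℝ) (hu : 0 < u)
    (hμ : 0 < μ) (n l : ℤ) (hn : n ≠ 0) :
    (μ ^ 2 * (n : ℝ) ^ 2 = 4 * b * ρ →
      nuH ρ u b μ n = nuP ρ u b μ n ∧
      nuH ρ u b μ n = ((-(μ * (n : ℝ) ^ 2) / 2 : ℝ) : ℂ)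
        + Complex.I * (u : ℂ) * (n : ℂ)) ∧
    (4 * b * ρ < μ ^ 2 * (n : ℝ) ^ 2 → 4 * b * ρ < μ ^ 2 * (l : ℝ) ^ 2 →
      nuH ρ u b μ n ≠ nuP ρ u b μ l) ∧
    (μ ^ 2 * (n : ℝ) ^ 2 < 4 * b * ρ → μ ^ 2 * (l : ℝ) ^ 2 < 4 * b * ρ →
      nuH ρ u b μ n ≠ nuP ρ u b μ l) := by
  exact ⟨fun h => ⟨nuH_eq_nuP_of_eq h, nuH_of_eq h⟩,
    fun hn2 hl2 => nuH_ne_nuP_of_lt_of_le hu.ne' hn hn2 hl2.le,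
    fun hn2 hl2 => nuH_ne_nuP_of_lt_of_lt hμ.ne' hu.ne' hn hn2 hl2⟩

/-- (a) If `μ₀²n² = 4bρ̄` the two branches merge: `ν_n^h = ν_n^p = −μ₀n²/2 + iūn`.
(b) If `μ₀²n² > 4bρ̄` and `μ₀²l² > 4bρ̄` then `ν_n^h ≠ ν_l^p`.
(c) If `μ₀²n² < 4bρ̄` and `μ₀²l² < 4bρ̄` then `ν_n^h ≠ ν_l^p`. -/
theorem hyperbolic_vs_parabolic (ρ u b μ : ℝ) (hρ : 0 < ρ) (hu : 0 < u) (hb : 0 < b)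
    (hμ : 0 < μ) (n l : ℤ) (hn : n ≠ 0) (hl : l ≠ 0) :
    (μ ^ 2 * (n : ℝ) ^ 2 = 4 * b * ρ →
      nuH ρ u b μ n = nuP ρ u b μ n ∧
      nuH ρ u b μ n = ((-(μ * (n : ℝ) ^ 2) / 2 : ℝ) : ℂ)
        + Complex.I * (u : ℂ) * (n : ℂ)) ∧
    (4 * b * ρ < μ ^ 2 * (n : ℝ) ^ 2 → 4 * b * ρ < μ ^ 2 * (l : ℝ) ^ 2 →
      nuH ρ u b μ n ≠ nuP ρ u b μ l) ∧
    (μ ^ 2 * (n : ℝ) ^ 2 < 4 * b * ρ → μ ^ 2 * (l : ℝ) ^ 2 < 4 * b * ρ →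
      nuH ρ u b μ n ≠ nuP ρ u b μ l) :=
  hyperbolic_vs_parabolic_general ρ u b μ hu hμ n l hn
end

section
/- There exists a constant C > 0 such that for every nonzero integer n the boundary observation terms of the eigenfunctions satisfy: |ρ̄·ν₂ⁿ| ≥ C, |ρ̄·ν₁ⁿ/(ν₁ⁿ − ū)| ≥ C, |ν₂ⁿ·(ν₂ⁿ − ū)| ≥ C/|n|, and |ν₁ⁿ| ≥ C·|n|. In particular all four quantities are nonzero for every nonzero integer n. -/
/-! The shifted eigenvalues `w₁ = ν₁ⁿ - ū` and `w₂ = ν₂ⁿ - ū` are the roots of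
`w² - iμ₀n w - bρ̄ = 0`, so `w₁ w₂ = -bρ̄`, and the root bound for this quadratic gives
`|w₁| ≤ μ₀|n| + √(bρ̄)`. In both regimes `Re ν₂ⁿ ≥ ū` and `|Im ν₁ⁿ| ≥ μ₀|n|/2`. Hence
`|ν₂ⁿ| ≥ ū`, `|ν₁ⁿ| ≥ μ₀|n|/2`, `|ν₁ⁿ / w₁| ≥ μ₀ / (2(μ₀ + √(bρ̄)))` and
`|ν₂ⁿ w₂| = |ν₂ⁿ| bρ̄ / |w₁| ≥ ū bρ̄ / ((μ₀ + √(bρ̄))|n|)`. -/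

open scoped Classical
open Complex

theorem Complex.re_div_I_mul_ofReal (z : ℂ) (x : ℝ) : (z / (I * x)).re = z.im / x := by
  simp [div_mul_eq_div_div_swap, div_I, div_ofReal_re]

theorem Complex.im_div_I_mul_ofReal (z : ℂ) (x : ℝ) : (z / (I * x)).im = -z.re / x := by
  simp [div_mul_eq_div_div_swap, div_I, div_ofReal_im, neg_div]

theorem norm_le_of_sq_eq_mul_add {𝕜 : Type*} [NormedField 𝕜] {w p q : 𝕜}
    (h : w ^ 2 = p * w + q) : ‖w‖ ≤ ‖p‖ + √‖q‖ := by
  have hw : ‖w‖ ^ 2 ≤ ‖p‖ * ‖w‖ + ‖q‖ := by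
    rw [← norm_pow, h, ← norm_mul]
    exact norm_add_le _ _
  have hq := Real.sq_sqrt (norm_nonneg q)
  by_contra! hlt
  have hr : 0 ≤ √‖q‖ := Real.sqrt_nonneg _
  have hpos : 0 < ‖w‖ + √‖q‖ := by linarith [norm_nonneg p]
  -- `‖w‖² > (‖p‖ + √‖q‖) ‖w‖ ≥ ‖p‖ ‖w‖ + ‖q‖`, contradicting `hw`
  nlinarith [mul_pos (sub_pos.2 hlt) hpos, norm_nonneg p]

section Eigenvalues

variable (ρ u b μ : ℝ) (n : ℤ)

theorem nuH_add_nuP :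
    nuH ρ u b μ n + nuP ρ u b μ n =
      ((-(μ * (n : ℝ) ^ 2) : ℝ) : ℂ) + I * ((2 * (u * n) : ℝ) : ℂ) := by
  unfold nuH nuP
  split_ifs <;> apply Complex.ext <;>
    simp only [add_re, add_im, mul_re, mul_im, I_re, I_im, ofReal_re, ofReal_im] <;> ring

theorem nuH_sub_mul_nuP_sub :
    (nuH ρ u b μ n - I * ((u * n : ℝ) : ℂ)) * (nuP ρ u b μ n - I * ((u * n : ℝ) : ℂ)) =
      ((b * ρ * (n : ℝ) ^ 2 : ℝ) : ℂ) := by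
  unfold nuH nuP
  split_ifs with h
  · set s := √(μ ^ 2 * (n : ℝ) ^ 2 - 4 * b * ρ)
    have hs : s ^ 2 = _ := Real.sq_sqrt (sub_nonneg.2 h)
    have hn := sq_abs (n : ℝ)
    apply Complex.ext <;>
      simp only [add_re, add_im, sub_re, sub_im, mul_re, mul_im, I_re, I_im, ofReal_re, ofReal_im]
    · linear_combination (-(n : ℝ) ^ 2 / 4) * hs + (-s ^ 2 / 4) * hn
    · ring
  · have hs := Real.sq_sqrt (sub_nonneg.2 (not_le.1 h).le)
    apply Complex.ext <;>
      simp only [add_re, add_im, sub_re, sub_im, mul_re, mul_im, I_re, I_im, ofReal_re, ofReal_im]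
    · linear_combination ((n : ℝ) ^ 2 / 4) * hs
    · ring

theorem re_nuP_le : (nuP ρ u b μ n).re ≤ -(μ * (n : ℝ) ^ 2) / 2 := by
  unfold nuP
  split_ifs
  · simp only [add_re, mul_re, I_re, I_im, ofReal_re, ofReal_im]
    have := mul_nonneg (abs_nonneg (n : ℝ)) (Real.sqrt_nonneg (μ ^ 2 * (n : ℝ) ^ 2 - 4 * b * ρ))
    linarith
  · simp only [add_re, mul_re, I_re, I_im, ofReal_re, ofReal_im]
    linarith

theorem im_nuH_sub_mul_nonneg : 0 ≤ ((nuH ρ u b μ n).im - u * n) * n := by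
  unfold nuH
  split_ifs
  · simp only [add_im, mul_im, I_re, I_im, ofReal_re, ofReal_im]
    linarith
  · simp only [add_im, mul_im, I_re, I_im, ofReal_re, ofReal_im]
    have := Real.sqrt_nonneg (4 * b * ρ - μ ^ 2 * (n : ℝ) ^ 2)
    nlinarith [sq_nonneg (n : ℝ)]

end Eigenvalues

section Observation

variable {ρ u b μ : ℝ} {n : ℤ}

theorem div_I_mul_intCast_sub (z : ℂ) (hn : n ≠ 0) :
    z / (I * (n : ℂ)) - u = (z - I * ((u * n : ℝ) : ℂ)) / (I * ((n : ℝ) : ℂ)) := by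
  rw [ofReal_intCast]
  field_simp
  push_cast
  ring

theorem nu1_sub_add_nu2_sub (hn : n ≠ 0) :
    (nu1 ρ u b μ n - u) + (nu2 ρ u b μ n - u) = I * ((μ * n : ℝ) : ℂ) := by
  have hsum := nuH_add_nuP ρ u b μ n
  rw [nu1, nu2, div_I_mul_intCast_sub _ hn, div_I_mul_intCast_sub _ hn, ← add_div,
    div_eq_iff (by simpa)]
  push_cast at hsum ⊢
  linear_combination hsum - μ * (n : ℂ) ^ 2 * I_sq

theorem nu1_sub_mul_nu2_sub (hn : n ≠ 0) :
    (nu1 ρ u b μ n - u) * (nu2 ρ u b μ n - u) = -((b * ρ : ℝ) : ℂ) := by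
  have hprod := nuH_sub_mul_nuP_sub ρ u b μ n
  rw [nu1, nu2, div_I_mul_intCast_sub _ hn, div_I_mul_intCast_sub _ hn, div_mul_div_comm,
    div_eq_iff (by simpa)]
  push_cast at hprod ⊢
  linear_combination hprod + b * ρ * (n : ℂ) ^ 2 * I_sq

theorem le_re_nu2 (hn : n ≠ 0) : u ≤ (nu2 ρ u b μ n).re := by
  have hre : (nu2 ρ u b μ n).re = u + ((nuH ρ u b μ n).im - u * n) * n / (n : ℝ) ^ 2 := by
    rw [nu2, ← ofReal_intCast, re_div_I_mul_ofReal]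
    field_simp
    ring
  rw [hre, le_add_iff_nonneg_right]
  exact div_nonneg (im_nuH_sub_mul_nonneg ρ u b μ n) (sq_nonneg _)

theorem le_abs_im_nu1 (hn : n ≠ 0) : μ * |(n : ℝ)| / 2 ≤ |(nu1 ρ u b μ n).im| := by
  have hn' : (0 : ℝ) < |(n : ℝ)| := by positivity
  rw [nu1, ← ofReal_intCast, im_div_I_mul_ofReal, abs_div, le_div_iff₀ hn', abs_neg]
  calc μ * |(n : ℝ)| / 2 * |(n : ℝ)| = μ * (n : ℝ) ^ 2 / 2 := by rw [← sq_abs (n : ℝ)]; ring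
    _ ≤ -(nuP ρ u b μ n).re := by linarith [re_nuP_le ρ u b μ n]
    _ ≤ _ := neg_le_abs _

theorem norm_nu1_sub_le (hμ : 0 ≤ μ) (hbρ : 0 ≤ b * ρ) (hn : n ≠ 0) :
    ‖nu1 ρ u b μ n - u‖ ≤ (μ + √(b * ρ)) * |(n : ℝ)| := by
  have hroot : (nu1 ρ u b μ n - u) ^ 2 =
      I * ((μ * n : ℝ) : ℂ) * (nu1 ρ u b μ n - u) + ((b * ρ : ℝ) : ℂ) := by
    linear_combination (nu1 ρ u b μ n - u) * nu1_sub_add_nu2_sub hn - nu1_sub_mul_nu2_sub hn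
  have h1 : (1 : ℝ) ≤ |(n : ℝ)| := by exact_mod_cast Int.one_le_abs hn
  calc ‖nu1 ρ u b μ n - u‖ ≤ ‖I * ((μ * n : ℝ) : ℂ)‖ + √‖((b * ρ : ℝ) : ℂ)‖ :=
        norm_le_of_sq_eq_mul_add hroot
    _ = μ * |(n : ℝ)| + √(b * ρ) := by
      rw [norm_mul, norm_I, one_mul, norm_real, norm_real, Real.norm_eq_abs, Real.norm_eq_abs,
        abs_mul, abs_of_nonneg hμ, abs_of_nonneg hbρ]
    _ ≤ (μ + √(b * ρ)) * |(n : ℝ)| := by nlinarith [Real.sqrt_nonneg (b * ρ)]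

theorem le_norm_nu2 (hn : n ≠ 0) : u ≤ ‖nu2 ρ u b μ n‖ :=
  (le_re_nu2 hn).trans (re_le_norm _)

theorem le_norm_nu1 (hn : n ≠ 0) : μ / 2 * |(n : ℝ)| ≤ ‖nu1 ρ u b μ n‖ := by
  rw [div_mul_eq_mul_div]
  exact (le_abs_im_nu1 hn).trans (abs_im_le_norm _)

theorem nu1_sub_ne_zero (hbρ : b * ρ ≠ 0) (hn : n ≠ 0) : nu1 ρ u b μ n - u ≠ 0 := by
  intro h
  have := nu1_sub_mul_nu2_sub (ρ := ρ) (u := u) (b := b) (μ := μ) hn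
  rw [h, zero_mul, eq_comm, neg_eq_zero, ofReal_eq_zero] at this
  exact hbρ this

theorem norm_nu1_sub_mul_norm_nu2_sub (hn : n ≠ 0) (hbρ : 0 ≤ b * ρ) :
    ‖nu1 ρ u b μ n - u‖ * ‖nu2 ρ u b μ n - u‖ = b * ρ := by
  rw [← norm_mul, nu1_sub_mul_nu2_sub hn, norm_neg, norm_real, Real.norm_of_nonneg hbρ]

theorem le_norm_mul_nu1_div (hρ : 0 < ρ) (hb : 0 < b) (hμ : 0 ≤ μ) (hn : n ≠ 0) :
    ρ * μ / (2 * (μ + √(b * ρ))) ≤ ‖(ρ : ℂ) * nu1 ρ u b μ n / (nu1 ρ u b μ n - u)‖ := by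
  have hbρ : 0 < b * ρ := mul_pos hb hρ
  have hw : 0 < ‖nu1 ρ u b μ n - u‖ := norm_pos_iff.2 (nu1_sub_ne_zero hbρ.ne' hn)
  calc ρ * μ / (2 * (μ + √(b * ρ)))
        = ρ * (μ / 2 * |(n : ℝ)|) / ((μ + √(b * ρ)) * |(n : ℝ)|) := by field_simp
    _ ≤ ρ * ‖nu1 ρ u b μ n‖ / ‖nu1 ρ u b μ n - u‖ := by
        gcongr
        · exact le_norm_nu1 hn
        · exact norm_nu1_sub_le hμ hbρ.le hn
    _ = _ := by rw [norm_div, norm_mul, norm_real, Real.norm_of_nonneg hρ.le]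

theorem le_norm_nu2_mul_sub (hρ : 0 < ρ) (hb : 0 < b) (hμ : 0 ≤ μ) (hn : n ≠ 0) :
    u * (b * ρ) / (μ + √(b * ρ)) / |(n : ℝ)| ≤ ‖nu2 ρ u b μ n * (nu2 ρ u b μ n - u)‖ := by
  have hbρ : 0 < b * ρ := mul_pos hb hρ
  have hprod := norm_nu1_sub_mul_norm_nu2_sub (u := u) (μ := μ) hn hbρ.le
  have hw : 0 < ‖nu1 ρ u b μ n - u‖ := norm_pos_iff.2 (nu1_sub_ne_zero hbρ.ne' hn)
  calc u * (b * ρ) / (μ + √(b * ρ)) / |(n : ℝ)|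
        = u * (b * ρ / ((μ + √(b * ρ)) * |(n : ℝ)|)) := by field_simp
    _ ≤ ‖nu2 ρ u b μ n‖ * (b * ρ / ‖nu1 ρ u b μ n - u‖) :=
        mul_le_mul (le_norm_nu2 hn) (by gcongr; exact norm_nu1_sub_le hμ hbρ.le hn) (by positivity)
          (norm_nonneg _)
    _ = _ := by rw [norm_mul, ← hprod, mul_div_cancel_left₀ _ hw.ne']

end Observation

/-- Lower bounds for the boundary observation terms of the eigenfunctions:
`|ρ̄ν₂ⁿ| ≥ C`, `|ρ̄ν₁ⁿ/(ν₁ⁿ−ū)| ≥ C`, `|ν₂ⁿ(ν₂ⁿ−ū)| ≥ C/|n|`, `|ν₁ⁿ| ≥ C|n|`;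
in particular all four quantities are nonzero. -/
theorem observation_estimates (ρ u b μ : ℝ) (hρ : 0 < ρ) (hu : 0 < u) (hb : 0 < b)
    (hμ : 0 < μ) :
    ∃ C > 0, ∀ n : ℤ, n ≠ 0 →
      C ≤ ‖(ρ : ℂ) * nu2 ρ u b μ n‖ ∧
      C ≤ ‖(ρ : ℂ) * nu1 ρ u b μ n / (nu1 ρ u b μ n - (u : ℂ))‖ ∧
      C / |(n : ℝ)| ≤ ‖nu2 ρ u b μ n * (nu2 ρ u b μ n - (u : ℂ))‖ ∧
      C * |(n : ℝ)| ≤ ‖nu1 ρ u b μ n‖ ∧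
      (ρ : ℂ) * nu2 ρ u b μ n ≠ 0 ∧
      (ρ : ℂ) * nu1 ρ u b μ n / (nu1 ρ u b μ n - (u : ℂ)) ≠ 0 ∧
      nu2 ρ u b μ n * (nu2 ρ u b μ n - (u : ℂ)) ≠ 0 ∧
      nu1 ρ u b μ n ≠ 0 := by
  set K := μ + √(b * ρ)
  set C := min (min (ρ * u) (ρ * μ / (2 * K))) (min (u * (b * ρ) / K) (μ / 2))
  have hC : 0 < C := by positivity
  refine ⟨C, hC, fun n hn ↦ ?_⟩
  have hn' : (0 : ℝ) < |(n : ℝ)| := by positivity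
  have h1 : C ≤ ‖(ρ : ℂ) * nu2 ρ u b μ n‖ := by
    rw [norm_mul, norm_real, Real.norm_of_nonneg hρ.le]
    exact (min_le_left _ _).trans ((min_le_left _ _).trans
      (mul_le_mul_of_nonneg_left (le_norm_nu2 hn) hρ.le))
  have h2 : C ≤ ‖(ρ : ℂ) * nu1 ρ u b μ n / (nu1 ρ u b μ n - u)‖ :=
    (min_le_left _ _).trans ((min_le_right _ _).trans (le_norm_mul_nu1_div hρ hb hμ.le hn))
  have h3 : C / |(n : ℝ)| ≤ ‖nu2 ρ u b μ n * (nu2 ρ u b μ n - u)‖ :=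
    (div_le_div_of_nonneg_right ((min_le_right _ _).trans (min_le_left _ _)) hn'.le).trans
      (le_norm_nu2_mul_sub hρ hb hμ.le hn)
  have h4 : C * |(n : ℝ)| ≤ ‖nu1 ρ u b μ n‖ :=
    (mul_le_mul_of_nonneg_right ((min_le_right _ _).trans (min_le_right _ _)) hn'.le).trans
      (le_norm_nu1 hn)
  refine ⟨h1, h2, h3, h4, ?_, ?_, ?_, ?_⟩ <;> rw [← norm_pos_iff]
  exacts [hC.trans_le h1, hC.trans_le h2, (div_pos hC hn').trans_le h3,
    (mul_pos hC hn').trans_le h4]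
end

section
/- There exists a constant C > 0 such that for every nonzero integer n with μ₀²n² ≥ 4bρ̄, the hyperbolic eigenvalue satisfies |ν_n^h − (iūn − ω₀)| ≤ C/n². Consequently the family e_n := ν_n^h − iūn + ω₀ is square-summable over such n. -/
open scoped Classical
open Complex

/-! With `y = μ₀n²` and `κ = 4bρ̄/μ₀`, the real part of `ν_n^h` is `(√(y² - κy) - y)/2` and
`ω₀ = κ/4`. Rationalising twice gives `√(y² - κy) - y + κ/2 = -κ²y / (2(√(y² - κy) + y)²)`,
which is at most `κ²/(2y)` in absolute value, i.e. `O(1/n²)`; squares of such terms are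
summable over `ℤ`. -/

theorem sqrt_sq_sub_mul_sub_add_half_eq {y κ : ℝ} (hy : 0 < y) (hκy : κ ≤ y) :
    √(y ^ 2 - κ * y) - y + κ / 2 = -(κ ^ 2 * y) / (2 * (√(y ^ 2 - κ * y) + y) ^ 2) := by
  set S := √(y ^ 2 - κ * y)
  have hS : S ^ 2 = y ^ 2 - κ * y := Real.sq_sqrt (by nlinarith)
  have hSy : 0 < S + y := by positivity
  field_simp
  linear_combination (2 * S + 2 * y + κ) * hS

theorem abs_sqrt_sq_sub_mul_sub_add_half_le {y κ : ℝ} (hy : 0 < y) (hκy : κ ≤ y) :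
    |√(y ^ 2 - κ * y) - y + κ / 2| ≤ κ ^ 2 / (2 * y) := by
  rw [sqrt_sq_sub_mul_sub_add_half_eq hy hκy, abs_div, abs_neg,
    abs_of_nonneg (by positivity), abs_of_pos (by positivity)]
  have hy_le : y ^ 2 ≤ (√(y ^ 2 - κ * y) + y) ^ 2 := by
    gcongr
    exact le_add_of_nonneg_left (Real.sqrt_nonneg _)
  calc κ ^ 2 * y / (2 * (√(y ^ 2 - κ * y) + y) ^ 2)
      ≤ κ ^ 2 * y / (2 * y ^ 2) := by gcongr
    _ = κ ^ 2 / (2 * y) := by field_simp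

theorem summable_norm_sq_of_norm_le_div_sq {E : Type*} [SeminormedAddCommGroup E] {s : Set ℤ}
    {f : s → E} {C : ℝ} (hf : ∀ m : s, ‖f m‖ ≤ C / (m : ℝ) ^ 2) :
    Summable fun m : s => ‖f m‖ ^ 2 := by
  have hsum : Summable fun n : ℤ => C ^ 2 * (1 / (n : ℝ) ^ 4) :=
    (Real.summable_one_div_int_pow.mpr (by norm_num)).mul_left _
  refine (hsum.subtype s).of_nonneg_of_le (fun m => sq_nonneg _) fun m => ?_
  calc ‖f m‖ ^ 2 ≤ (C / (m : ℝ) ^ 2) ^ 2 := pow_le_pow_left₀ (norm_nonneg _) (hf m) 2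
    _ = C ^ 2 * (1 / (m : ℝ) ^ 4) := by ring

section nuH

variable {ρ u b μ : ℝ} {n : ℤ}

theorem nuH_sub_eq (hμ : μ ≠ 0) (h : 4 * b * ρ ≤ μ ^ 2 * (n : ℝ) ^ 2) :
    nuH ρ u b μ n - (I * u * n - ((b * ρ / μ : ℝ) : ℂ)) =
      (((√((μ * n ^ 2) ^ 2 - 4 * b * ρ / μ * (μ * n ^ 2)) - μ * n ^ 2
        + 4 * b * ρ / μ / 2) / 2 : ℝ) : ℂ) := by
  have hsqrt : |(n : ℝ)| * √(μ ^ 2 * n ^ 2 - 4 * b * ρ) =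
      √((μ * n ^ 2) ^ 2 - 4 * b * ρ / μ * (μ * n ^ 2)) := by
    rw [← Real.sqrt_sq_eq_abs, ← Real.sqrt_mul (sq_nonneg _)]
    congr 1
    field_simp
  rw [nuH, if_pos h, ← hsqrt]
  push_cast
  ring

theorem norm_nuH_sub_le (hμ : 0 < μ) (hn : n ≠ 0) (h : 4 * b * ρ ≤ μ ^ 2 * (n : ℝ) ^ 2) :
    ‖nuH ρ u b μ n - (I * u * n - ((b * ρ / μ : ℝ) : ℂ))‖
      ≤ (4 * b ^ 2 * ρ ^ 2 / μ ^ 3) / (n : ℝ) ^ 2 := by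
  have hy : 0 < μ * (n : ℝ) ^ 2 := by positivity
  have hκy : 4 * b * ρ / μ ≤ μ * n ^ 2 := by
    rw [div_le_iff₀ hμ]
    linarith
  rw [nuH_sub_eq hμ.ne' h, norm_real, Real.norm_eq_abs, abs_div, abs_two,
    div_le_iff₀ two_pos]
  refine (abs_sqrt_sq_sub_mul_sub_add_half_le hy hκy).trans_eq ?_
  field_simp
  ring

end nuH

theorem hyperbolic_asymptotic_estimate_general (ρ u b μ : ℝ) (hρ : 0 < ρ) (hb : 0 < b)
    (hμ : 0 < μ) :
    (∃ C > 0, ∀ n : ℤ, n ≠ 0 → 4 * b * ρ ≤ μ ^ 2 * (n : ℝ) ^ 2 →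
      ‖nuH ρ u b μ n
          - (Complex.I * (u : ℂ) * (n : ℂ) - ((b * ρ / μ : ℝ) : ℂ))‖ ≤ C / (n : ℝ) ^ 2) ∧
    Summable (fun m : {n : ℤ // n ≠ 0 ∧ 4 * b * ρ ≤ μ ^ 2 * (n : ℝ) ^ 2} =>
      ‖nuH ρ u b μ m.1 - Complex.I * (u : ℂ) * (m.1 : ℂ)
        + ((b * ρ / μ : ℝ) : ℂ)‖ ^ 2) := by
  refine ⟨⟨4 * b ^ 2 * ρ ^ 2 / μ ^ 3, by positivity, fun n hn h => norm_nuH_sub_le hμ hn h⟩, ?_⟩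
  simp_rw [sub_add]
  exact summable_norm_sq_of_norm_le_div_sq fun m => norm_nuH_sub_le hμ m.2.1 m.2.2

/-- There is `C > 0` such that `|ν_n^h − (iūn − ω₀)| ≤ C/n²` for all nonzero `n` with
`μ₀²n² ≥ 4bρ̄`, where `ω₀ = bρ̄/μ₀`; consequently `e_n := ν_n^h − iūn + ω₀` is
square-summable over such `n`. -/
theorem hyperbolic_asymptotic_estimate (ρ u b μ : ℝ) (hρ : 0 < ρ) (hu : 0 < u) (hb : 0 < b)
    (hμ : 0 < μ) :
    (∃ C > 0, ∀ n : ℤ, n ≠ 0 → 4 * b * ρ ≤ μ ^ 2 * (n : ℝ) ^ 2 →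
      ‖nuH ρ u b μ n
          - (Complex.I * (u : ℂ) * (n : ℂ) - ((b * ρ / μ : ℝ) : ℂ))‖ ≤ C / (n : ℝ) ^ 2) ∧
    Summable (fun m : {n : ℤ // n ≠ 0 ∧ 4 * b * ρ ≤ μ ^ 2 * (n : ℝ) ^ 2} =>
      ‖nuH ρ u b μ m.1 - Complex.I * (u : ℂ) * (m.1 : ℂ)
        + ((b * ρ / μ : ℝ) : ℂ)‖ ^ 2) :=
  hyperbolic_asymptotic_estimate_general ρ u b μ hρ hb hμ
end

section
/- The family of nonnegative reals n ↦ |ν₂ⁿ − ū|² + 1/|ν₁ⁿ − ū|², indexed by the nonzero integers n, is summable. (This is the quadratic closeness of the eigenfunctions Φ_n^h, Φ_n^p of the adjoint operator to the orthogonal family (ρ̄,0)e^{inx}, (0,1)e^{inx}, which underlies their Riesz basis property in (L²(0,2π))².) -/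
open scoped Classical
open Complex

open Filter

/-! Once `4bρ̄ ≤ μ₀²n²`, which holds for all but finitely many `n`, both eigenvalues lie on
the real-discriminant branch: with `a = μ₀|n|` and `s = √(a² - 4bρ̄)` one has
`|ν₂ⁿ - ū| = (a - s)/2` and `|ν₁ⁿ - ū| = (a + s)/2`. Their product is `bρ̄`, so the `n`-th term
equals `(4b²ρ̄² + 4)/(a + s)² ≤ (4b²ρ̄² + 4)/(μ₀²n²)`, and `∑ 1/n²` converges. -/

lemma sq_half_sub_sqrt_add_inv_sq_half_add_sqrt_le {a c : ℝ} (ha : 0 < a) (hc : c ≤ a ^ 2) :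
    ((a - √(a ^ 2 - c)) / 2) ^ 2 + 1 / ((a + √(a ^ 2 - c)) / 2) ^ 2
      ≤ (c ^ 2 / 4 + 4) / a ^ 2 := by
  set s := √(a ^ 2 - c)
  have hs : 0 ≤ s := Real.sqrt_nonneg _
  have hprod : (a - s) * (a + s) = c := by
    linear_combination -Real.sq_sqrt (sub_nonneg.2 hc)
  have has : 0 < a + s := by positivity
  calc ((a - s) / 2) ^ 2 + 1 / ((a + s) / 2) ^ 2 = (c ^ 2 / 4 + 4) / (a + s) ^ 2 := by
        rw [← hprod]; field_simp; ring
    _ ≤ (c ^ 2 / 4 + 4) / a ^ 2 := by gcongr; linarith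

lemma norm_add_I_mul_div_I_mul_sub (A u : ℝ) {n : ℤ} (hn : n ≠ 0) :
    ‖((A : ℂ) + I * ((u * n : ℝ) : ℂ)) / (I * n) - u‖ = |A| / |(n : ℝ)| := by
  have hn' : (n : ℂ) ≠ 0 := Int.cast_ne_zero.2 hn
  have : ((A : ℂ) + I * ((u * n : ℝ) : ℂ)) / (I * n) - u = A / (I * n) := by
    field_simp; push_cast; ring
  rw [this, norm_div, norm_mul, norm_real, norm_I, one_mul, norm_intCast, Real.norm_eq_abs]

section
variable {ρ u b μ : ℝ} {n : ℤ}

lemma norm_nu2_sub_sq (hn : n ≠ 0) (h : 4 * b * ρ ≤ μ ^ 2 * (n : ℝ) ^ 2) :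
    ‖nu2 ρ u b μ n - u‖ ^ 2 = ((μ * |(n : ℝ)| - √(μ ^ 2 * (n : ℝ) ^ 2 - 4 * b * ρ)) / 2) ^ 2 := by
  have hn' : (n : ℝ) ≠ 0 := Int.cast_ne_zero.2 hn
  rw [nu2, nuH, if_pos h, norm_add_I_mul_div_I_mul_sub _ _ hn, div_pow, sq_abs, sq_abs,
    div_eq_iff (pow_ne_zero 2 hn')]
  linear_combination
    ((√(μ ^ 2 * (n : ℝ) ^ 2 - 4 * b * ρ) ^ 2 - μ ^ 2 * (n : ℝ) ^ 2) / 4) * sq_abs (n : ℝ)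

lemma norm_nu1_sub_sq (hn : n ≠ 0) (h : 4 * b * ρ ≤ μ ^ 2 * (n : ℝ) ^ 2) :
    ‖nu1 ρ u b μ n - u‖ ^ 2 = ((μ * |(n : ℝ)| + √(μ ^ 2 * (n : ℝ) ^ 2 - 4 * b * ρ)) / 2) ^ 2 := by
  have hn' : (n : ℝ) ≠ 0 := Int.cast_ne_zero.2 hn
  rw [nu1, nuP, if_pos h, norm_add_I_mul_div_I_mul_sub _ _ hn, div_pow, sq_abs, sq_abs,
    div_eq_iff (pow_ne_zero 2 hn')]
  linear_combination
    ((√(μ ^ 2 * (n : ℝ) ^ 2 - 4 * b * ρ) ^ 2 - μ ^ 2 * (n : ℝ) ^ 2) / 4) * sq_abs (n : ℝ)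

lemma norm_nu2_sub_sq_add_inv_norm_nu1_sub_sq_le (hμ : 0 < μ) (hn : n ≠ 0)
    (h : 4 * b * ρ ≤ μ ^ 2 * (n : ℝ) ^ 2) :
    ‖nu2 ρ u b μ n - u‖ ^ 2 + 1 / ‖nu1 ρ u b μ n - u‖ ^ 2
      ≤ ((4 * b * ρ) ^ 2 / 4 + 4) / μ ^ 2 / (n : ℝ) ^ 2 := by
  have hμn : 0 < μ * |(n : ℝ)| := by positivity
  have := sq_half_sub_sqrt_add_inv_sq_half_add_sqrt_le hμn (c := 4 * b * ρ)
    (by rwa [mul_pow, sq_abs])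
  rw [mul_pow, sq_abs] at this
  rwa [norm_nu2_sub_sq hn h, norm_nu1_sub_sq hn h, div_div]

end

lemma eventually_le_mul_intCast_sq (c : ℝ) {μ : ℝ} (hμ : μ ≠ 0) :
    ∀ᶠ n : ℤ in cofinite, c ≤ μ ^ 2 * (n : ℝ) ^ 2 := by
  have h : Tendsto (fun n : ℤ => ‖n‖) cofinite atTop := by
    rw [← cocompact_eq_cofinite]; exact tendsto_norm_cocompact_atTop
  have := (((tendsto_pow_atTop two_ne_zero).comp h).const_mul_atTop
    (pow_pos (abs_pos.2 hμ) 2)).eventually_ge_atTop c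
  simpa [Int.norm_eq_abs, sq_abs] using this

theorem quadratic_closeness_general (ρ u b μ : ℝ) (hμ : 0 < μ) :
    Summable (fun m : {n : ℤ // n ≠ 0} =>
      ‖nu2 ρ u b μ m.1 - (u : ℂ)‖ ^ 2
        + 1 / ‖nu1 ρ u b μ m.1 - (u : ℂ)‖ ^ 2) := by
  have hsum : Summable fun m : {n : ℤ // n ≠ 0} =>
      ((4 * b * ρ) ^ 2 / 4 + 4) / μ ^ 2 / (m.1 : ℝ) ^ 2 :=
    (((Real.summable_one_div_int_pow.2 one_lt_two).subtype _).mul_left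
      (((4 * b * ρ) ^ 2 / 4 + 4) / μ ^ 2)).congr fun m => by simp [div_eq_mul_inv]
  refine hsum.of_norm_bounded_eventually ?_
  filter_upwards [Subtype.val_injective.tendsto_cofinite.eventually
    (eventually_le_mul_intCast_sq (4 * b * ρ) hμ.ne')] with m hm
  rw [Real.norm_of_nonneg (by positivity)]
  exact norm_nu2_sub_sq_add_inv_norm_nu1_sub_sq_le hμ m.2 hm

/-- Quadratic closeness of the eigenfunctions of the adjoint operator to the orthogonal
family `(ρ̄,0)e^{inx}`, `(0,1)e^{inx}`: the family
`n ↦ |ν₂ⁿ − ū|² + 1/|ν₁ⁿ − ū|²` is summable over the nonzero integers. -/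
theorem quadratic_closeness (ρ u b μ : ℝ) (hρ : 0 < ρ) (hu : 0 < u) (hb : 0 < b)
    (hμ : 0 < μ) :
    Summable (fun m : {n : ℤ // n ≠ 0} =>
      ‖nu2 ρ u b μ m.1 - (u : ℂ)‖ ^ 2
        + 1 / ‖nu1 ρ u b μ m.1 - (u : ℂ)‖ ^ 2) :=
  quadratic_closeness_general ρ u b μ hμ
end

section
/- (Lack of null controllability in velocity for less regular initial states.) For every T > 0 and every real s with 0 ≤ s < 1, there is no constant C > 0 such that for all nonzero integers n, (1 + n²)^{−s} ≤ C·∫₀ᵀ |ν₂ⁿ(ν₂ⁿ − ū)|²·e^{2Re(ν_n^h)(T−t)} dt. (This expresses that the observability inequality in Ḣ^{−s}_per × L̇² fails on the hyperbolic eigenfunctions Φ_n^h; consequently the linearized barotropic system with one boundary control in velocity is not null controllable at any time T > 0 in Ḣ^s_per(0,2π) × L̇²(0,2π) for 0 ≤ s < 1.) -/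
/-!
For large `n > 0` the eigenvalue `ν_n^h` lies on the hyperbolic branch, where
`ν_n^h = a_n + i ū n` with `-2bρ̄/μ₀ ≤ a_n ≤ 0`. Hence `ν₂ⁿ = ū - i a_n / n`, so
`|ν₂ⁿ(ν₂ⁿ - ū)|² = (ū² + (a_n/n)²)(a_n/n)² = O(n⁻²)`, while the exponential weight is at
most `1`.
The right-hand side of the observability inequality is therefore `O(n⁻²)`, which cannot dominate
`(1 + n²)^{-s}` when `s < 1`.
-/

open scoped Classical
open Complex

open Filter

lemma sqrt_sq_mul_sq_sub_le {μ β x : ℝ} (hμ : 0 ≤ μ) (hβ : 0 ≤ β) (hx : 0 ≤ x) :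
    √(μ ^ 2 * x ^ 2 - β) ≤ μ * x :=
  Real.sqrt_le_iff.2 ⟨by positivity, by linarith⟩

lemma neg_mul_sq_add_mul_sqrt_nonpos {μ β x : ℝ} (hμ : 0 ≤ μ) (hβ : 0 ≤ β)
    (hx : 0 ≤ x) :
    -(μ * x ^ 2) + x * √(μ ^ 2 * x ^ 2 - β) ≤ 0 := by
  nlinarith [sqrt_sq_mul_sq_sub_le hμ hβ hx]

lemma neg_div_le_neg_mul_sq_add_mul_sqrt {μ β x : ℝ} (hμ : 0 < μ) (hβ : 0 ≤ β)
    (hx : 0 ≤ x) (h : β ≤ μ ^ 2 * x ^ 2) : -(β / μ) ≤ -(μ * x ^ 2) + x * √(μ ^ 2 * x ^ 2 - β) := by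
  set S := √(μ ^ 2 * x ^ 2 - β)
  have hS2 : S ^ 2 = μ ^ 2 * x ^ 2 - β := Real.sq_sqrt (by linarith)
  have hS : S ≤ μ * x := sqrt_sq_mul_sq_sub_le hμ.le hβ hx
  rw [neg_le, le_div_iff₀ hμ]
  -- `μx (μx - S) ≤ (μx - S)(μx + S) = β`
  nlinarith [mul_nonneg (sub_nonneg.2 hS) (Real.sqrt_nonneg (μ ^ 2 * x ^ 2 - β))]

lemma norm_mul_sub_sq_of_eq_sub_I_mul {z : ℂ} {u a : ℝ} (hz : z = u - I * a) :
    ‖z * (z - u)‖ ^ 2 = (u ^ 2 + a ^ 2) * a ^ 2 := by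
  rw [hz, sub_sub_cancel_left, norm_mul, norm_neg, norm_mul, norm_I, one_mul, norm_real,
    Real.norm_eq_abs, mul_pow, sq_abs, ← normSq_eq_norm_sq, normSq_apply]
  simp [sq]

lemma intervalIntegral_mul_exp_le {c a T : ℝ} (hc : 0 ≤ c) (ha : a ≤ 0) (hT : 0 ≤ T) :
    ∫ t in (0 : ℝ)..T, c * Real.exp (a * (T - t)) ≤ T * c := by
  calc ∫ t in (0 : ℝ)..T, c * Real.exp (a * (T - t))
      ≤ ∫ _ in (0 : ℝ)..T, c := by
        refine intervalIntegral.integral_mono_on hT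
          ((by fun_prop : Continuous _).intervalIntegrable _ _) intervalIntegrable_const
          fun t ht ↦ mul_le_of_le_one_right hc (Real.exp_le_one_iff.2 ?_)
        exact mul_nonpos_of_nonpos_of_nonneg ha (sub_nonneg.2 ht.2)
    _ = T * c := by simp

lemma eventually_div_sq_lt_one_add_sq_rpow_neg {s : ℝ} (hs : s < 1) (M : ℝ) :
    ∀ᶠ n : ℕ in atTop, M / (n : ℝ) ^ 2 < (1 + (n : ℝ) ^ 2) ^ (-s) := by
  have hgrow : Tendsto (fun n : ℕ ↦ (1 + (n : ℝ) ^ 2) ^ (1 - s)) atTop atTop :=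
    (tendsto_rpow_atTop (by linarith : 0 < 1 - s)).comp <| tendsto_atTop_add_const_left _ _ <|
      (tendsto_pow_atTop two_ne_zero).comp tendsto_natCast_atTop_atTop
  filter_upwards [eventually_ge_atTop 1, hgrow.eventually_gt_atTop (2 * |M|)] with n hn hbig
  have hn' : (1 : ℝ) ≤ n := by exact_mod_cast hn
  have hpos : (0 : ℝ) < 1 + n ^ 2 := by positivity
  have hsplit : (1 + (n : ℝ) ^ 2) ^ (1 - s) = (1 + (n : ℝ) ^ 2) ^ (-s) * (1 + n ^ 2) := by
    rw [sub_eq_neg_add, Real.rpow_add hpos, Real.rpow_one]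
  calc M / (n : ℝ) ^ 2 ≤ 2 * |M| / (1 + n ^ 2) := by
        rw [div_le_div_iff₀ (by positivity) hpos]
        nlinarith [mul_le_mul_of_nonneg_right (le_abs_self M) hpos.le,
          mul_le_mul_of_nonneg_left (by nlinarith : 1 + (n : ℝ) ^ 2 ≤ 2 * n ^ 2) (abs_nonneg M)]
    _ < (1 + (n : ℝ) ^ 2) ^ (-s) := by rwa [div_lt_iff₀ hpos, ← hsplit]

section Hyperbolic

variable {ρ u b μ : ℝ} {n : ℕ}

lemma nuH_natCast_of_le (h : 4 * b * ρ ≤ μ ^ 2 * (n : ℝ) ^ 2) :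
    nuH ρ u b μ n =
      (((-(μ * (n : ℝ) ^ 2) + n * √(μ ^ 2 * (n : ℝ) ^ 2 - 4 * b * ρ)) / 2 : ℝ) : ℂ)
        + I * ((u * n : ℝ) : ℂ) := by
  simp only [nuH, Int.cast_natCast, if_pos h, Nat.abs_cast]

lemma re_nuH_natCast_of_le (h : 4 * b * ρ ≤ μ ^ 2 * (n : ℝ) ^ 2) :
    (nuH ρ u b μ n).re =
      (-(μ * (n : ℝ) ^ 2) + n * √(μ ^ 2 * (n : ℝ) ^ 2 - 4 * b * ρ)) / 2 := by
  rw [nuH_natCast_of_le h, add_re, ofReal_re, I_mul_re, ofReal_im, neg_zero, add_zero]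

lemma nu2_natCast_of_le (hn : n ≠ 0) (h : 4 * b * ρ ≤ μ ^ 2 * (n : ℝ) ^ 2) :
    nu2 ρ u b μ n = u - I * ((nuH ρ u b μ n).re / n : ℝ) := by
  have hn : (n : ℂ) ≠ 0 := Nat.cast_ne_zero.2 hn
  rw [nu2, re_nuH_natCast_of_le h, nuH_natCast_of_le h, Int.cast_natCast,
    div_eq_iff (mul_ne_zero I_ne_zero hn)]
  set A := (-(μ * (n : ℝ) ^ 2) + n * √(μ ^ 2 * (n : ℝ) ^ 2 - 4 * b * ρ)) / 2
  push_cast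
  field_simp
  linear_combination (A : ℂ) * I_sq

lemma re_nuH_natCast_nonpos (hbρ : 0 ≤ b * ρ) (hμ : 0 < μ)
    (h : 4 * b * ρ ≤ μ ^ 2 * (n : ℝ) ^ 2) : (nuH ρ u b μ n).re ≤ 0 := by
  rw [re_nuH_natCast_of_le h]
  linarith [neg_mul_sq_add_mul_sqrt_nonpos hμ.le (by linarith : 0 ≤ 4 * b * ρ) n.cast_nonneg]

lemma neg_le_re_nuH_natCast (hbρ : 0 ≤ b * ρ) (hμ : 0 < μ)
    (h : 4 * b * ρ ≤ μ ^ 2 * (n : ℝ) ^ 2) : -(2 * b * ρ / μ) ≤ (nuH ρ u b μ n).re := by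
  have := neg_div_le_neg_mul_sq_add_mul_sqrt hμ (by linarith) n.cast_nonneg h
  rw [re_nuH_natCast_of_le h, show 4 * b * ρ / μ = 2 * (2 * b * ρ / μ) by ring] at *
  linarith

lemma observability_integral_le (hbρ : 0 ≤ b * ρ) (hμ : 0 < μ) {T : ℝ} (hT : 0 ≤ T)
    (hn : 1 ≤ n) (h : 4 * b * ρ ≤ μ ^ 2 * (n : ℝ) ^ 2) :
    ∫ t in (0 : ℝ)..T,
        ‖nu2 ρ u b μ n * (nu2 ρ u b μ n - (u : ℂ))‖ ^ 2
          * Real.exp (2 * (nuH ρ u b μ n).re * (T - t))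
      ≤ T * ((u ^ 2 + (2 * b * ρ / μ) ^ 2) * (2 * b * ρ / μ) ^ 2) / (n : ℝ) ^ 2 := by
  set q := 2 * b * ρ / μ
  set a := (nuH ρ u b μ n).re
  have hn' : (1 : ℝ) ≤ n := by exact_mod_cast hn
  have hnorm : ‖nu2 ρ u b μ n * (nu2 ρ u b μ n - (u : ℂ))‖ ^ 2 =
      (u ^ 2 + (a / n) ^ 2) * (a / n) ^ 2 :=
    norm_mul_sub_sq_of_eq_sub_I_mul (nu2_natCast_of_le (by omega) h)
  have ha_nonpos : a ≤ 0 := re_nuH_natCast_nonpos hbρ hμ h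
  have ha : (a / n) ^ 2 ≤ q ^ 2 / (n : ℝ) ^ 2 := by
    rw [div_pow]
    refine div_le_div_of_nonneg_right (sq_le_sq' (neg_le_re_nuH_natCast hbρ hμ h) ?_)
      (by positivity)
    exact ha_nonpos.trans (div_nonneg (by linarith) hμ.le)
  have ha' : (a / n) ^ 2 ≤ q ^ 2 := ha.trans (div_le_self (sq_nonneg q) (by nlinarith))
  refine (intervalIntegral_mul_exp_le (sq_nonneg _) (by linarith) hT).trans ?_
  rw [hnorm, mul_div_assoc]
  gcongr
  calc (u ^ 2 + (a / n) ^ 2) * (a / n) ^ 2 ≤ (u ^ 2 + q ^ 2) * (q ^ 2 / (n : ℝ) ^ 2) := by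
        gcongr
    _ = (u ^ 2 + q ^ 2) * q ^ 2 / (n : ℝ) ^ 2 := by ring

end Hyperbolic

theorem lack_of_null_controllability_velocity_general (ρ u b μ : ℝ) (hρ : 0 < ρ)
    (hb : 0 < b) (hμ : 0 < μ) (T : ℝ) (hT : 0 < T) (s : ℝ) (hs1 : s < 1) :
    ¬∃ C > 0, ∀ n : ℤ, n ≠ 0 →
      (1 + (n : ℝ) ^ 2) ^ (-s) ≤
        C * ∫ t in (0 : ℝ)..T,
          ‖nu2 ρ u b μ n * (nu2 ρ u b μ n - (u : ℂ))‖ ^ 2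
            * Real.exp (2 * (nuH ρ u b μ n).re * (T - t)) := by
  rintro ⟨C, hC, hobs⟩
  set K := (u ^ 2 + (2 * b * ρ / μ) ^ 2) * (2 * b * ρ / μ) ^ 2
  have hhyp : ∀ᶠ n : ℕ in atTop, 4 * b * ρ ≤ μ ^ 2 * (n : ℝ) ^ 2 :=
    (((tendsto_pow_atTop two_ne_zero).comp tendsto_natCast_atTop_atTop).const_mul_atTop
      (by positivity)).eventually_ge_atTop _
  obtain ⟨n, hn, hnh, hlt⟩ := ((eventually_ge_atTop 1).and
    (hhyp.and (eventually_div_sq_lt_one_add_sq_rpow_neg hs1 (C * (T * K))))).exists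
  have hle := (hobs n (by omega)).trans (mul_le_mul_of_nonneg_left
    (observability_integral_le (mul_pos hb hρ).le hμ hT.le hn hnh) hC.le)
  push_cast at hle
  rw [mul_div_assoc] at hlt
  linarith

/-- Lack of null controllability in velocity for less regular initial states: for any
`T > 0` and `0 ≤ s < 1` there is no constant `C > 0` such that
`(1 + n²)^{−s} ≤ C·∫₀ᵀ |ν₂ⁿ(ν₂ⁿ − ū)|²·e^{2Re(ν_n^h)(T−t)} dt` for all nonzero `n`. -/
theorem lack_of_null_controllability_velocity (ρ u b μ : ℝ) (hρ : 0 < ρ) (hu : 0 < u)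
    (hb : 0 < b) (hμ : 0 < μ) (T : ℝ) (hT : 0 < T) (s : ℝ) (hs0 : 0 ≤ s) (hs1 : s < 1) :
    ¬∃ C > 0, ∀ n : ℤ, n ≠ 0 →
      (1 + (n : ℝ) ^ 2) ^ (-s) ≤
        C * ∫ t in (0 : ℝ)..T,
          ‖nu2 ρ u b μ n * (nu2 ρ u b μ n - (u : ℂ))‖ ^ 2
            * Real.exp (2 * (nuH ρ u b μ n).re * (T - t)) :=
  lack_of_null_controllability_velocity_general ρ u b μ hρ hb hμ T hT s hs1
end

section
/- (Transport approximation of the hyperbolic modes.) For every T > 0 there exists a constant C > 0 such that for every nonzero integer n with μ₀²n² ≥ 4bρ̄, ∫₀ᵀ | exp(ν_n^h·(T−t)) − exp((iūn − ω₀)·(T−t)) |² dt ≤ C/n². (This estimate shows that the hyperbolic solution modes are approximated by the corresponding pure transport modes, and is the key step in the proof of lack of null controllability at small time.) -/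
open scoped Classical
open Complex

theorem Complex.norm_exp_sub_exp_le_of_re_nonpos {z w : ℂ} (hz : z.re ≤ 0) (hw : w.re ≤ 0) :
    ‖exp z - exp w‖ ≤ ‖z - w‖ := by
  simpa using (convex_halfSpace_re_le (0 : ℝ)).norm_image_sub_le_of_norm_deriv_le (f := exp)
    (C := 1) (fun _ _ => differentiableAt_exp) (fun x hx => by simpa [norm_exp] using hx) hw hz

theorem integral_norm_exp_mul_sub_exp_mul_sq_le {z w : ℂ} (hz : z.re ≤ 0) (hw : w.re ≤ 0)
    {T : ℝ} (hT : 0 ≤ T) :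
    ∫ t in (0 : ℝ)..T, ‖exp (z * ((T : ℂ) - (t : ℂ))) - exp (w * ((T : ℂ) - (t : ℂ)))‖ ^ 2
      ≤ ‖z - w‖ ^ 2 * T ^ 3 := by
  have hpoint : ∀ t ∈ Set.uIoc (0 : ℝ) T,
      ‖‖exp (z * ((T : ℂ) - (t : ℂ))) - exp (w * ((T : ℂ) - (t : ℂ)))‖ ^ 2‖
        ≤ (‖z - w‖ * T) ^ 2 := by
    intro t ht
    rw [Set.uIoc_of_le hT] at ht
    have hs : ((T : ℂ) - (t : ℂ)) = ((T - t : ℝ) : ℂ) := by push_cast; ring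
    have hs0 : 0 ≤ T - t := by linarith [ht.2]
    have hre : ∀ v : ℂ, v.re ≤ 0 → (v * ((T - t : ℝ) : ℂ)).re ≤ 0 := fun v hv => by
      simpa using mul_nonpos_of_nonpos_of_nonneg hv hs0
    rw [norm_pow, norm_norm, hs]
    gcongr
    calc _ ≤ ‖z * ((T - t : ℝ) : ℂ) - w * ((T - t : ℝ) : ℂ)‖ :=
          norm_exp_sub_exp_le_of_re_nonpos (hre z hz) (hre w hw)
      _ = ‖z - w‖ * (T - t) := by rw [← sub_mul, norm_mul, norm_real, Real.norm_of_nonneg hs0]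
      _ ≤ ‖z - w‖ * T := by gcongr; linarith [ht.1]
  calc _ ≤ ‖∫ t in (0 : ℝ)..T,
          ‖exp (z * ((T : ℂ) - (t : ℂ))) - exp (w * ((T : ℂ) - (t : ℂ)))‖ ^ 2‖ := Real.le_norm_self _
    _ ≤ (‖z - w‖ * T) ^ 2 * |T - 0| := intervalIntegral.norm_integral_le_of_norm_le_const hpoint
    _ = ‖z - w‖ ^ 2 * T ^ 3 := by rw [sub_zero, abs_of_nonneg hT]; ring

/-- The real part of `ν_n^h` at `x = n`, with `β = b ρ̄`, `μ = μ₀`. -/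
noncomputable def hyperbolicRe (β μ x : ℝ) : ℝ :=
  (-(μ * x ^ 2) + |x| * Real.sqrt (μ ^ 2 * x ^ 2 - 4 * β)) / 2

theorem hyperbolicRe_add_bounds {β μ x : ℝ} (hβ : 0 < β) (hμ : 0 < μ)
    (h : 4 * β ≤ μ ^ 2 * x ^ 2) :
    hyperbolicRe β μ x + β / μ ≤ 0 ∧
      |hyperbolicRe β μ x + β / μ| ≤ 4 * β ^ 2 / (μ ^ 3 * x ^ 2) := by
  set r := |x| * Real.sqrt (μ ^ 2 * x ^ 2 - 4 * β)
  have hr : 0 ≤ r := by positivity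
  have hr2 : r ^ 2 = x ^ 2 * (μ ^ 2 * x ^ 2 - 4 * β) := by
    rw [mul_pow, sq_abs, Real.sq_sqrt (by linarith)]
  have hq : μ ^ 2 * x ^ 2 / 2 ≤ μ * r + μ ^ 2 * x ^ 2 - 2 * β := by
    nlinarith [mul_nonneg hμ.le hr]
  have hx : 0 < μ ^ 2 * x ^ 2 := by linarith
  have hqpos : 0 < μ * r + μ ^ 2 * x ^ 2 - 2 * β := by linarith
  -- rationalising `μ r - (μ²x² - 2β)`, whose conjugate product is `-4β²`
  have key : hyperbolicRe β μ x + β / μ = -(2 * β ^ 2) / (μ * (μ * r + μ ^ 2 * x ^ 2 - 2 * β)) := by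
    rw [eq_div_iff (mul_pos hμ hqpos).ne', hyperbolicRe]
    field_simp
    linear_combination μ ^ 2 * hr2
  rw [key]
  refine ⟨div_nonpos_of_nonpos_of_nonneg (by nlinarith) (mul_pos hμ hqpos).le, ?_⟩
  rw [abs_div, abs_neg, abs_of_pos (by positivity), abs_of_pos (mul_pos hμ hqpos)]
  calc 2 * β ^ 2 / (μ * (μ * r + μ ^ 2 * x ^ 2 - 2 * β))
      ≤ 2 * β ^ 2 / (μ * (μ ^ 2 * x ^ 2 / 2)) := by gcongr
    _ = 4 * β ^ 2 / (μ ^ 3 * x ^ 2) := by field_simp; ring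

theorem nuH_eq_hyperbolicRe {ρ u b μ : ℝ} {n : ℤ} (h : 4 * b * ρ ≤ μ ^ 2 * (n : ℝ) ^ 2) :
    nuH ρ u b μ n = hyperbolicRe (b * ρ) μ n + I * (u * n) := by
  rw [nuH, if_pos h, hyperbolicRe, mul_assoc 4 b ρ]
  push_cast
  ring

theorem transport_approximation_general (ρ u b μ : ℝ) (hρ : 0 < ρ) (hb : 0 < b)
    (hμ : 0 < μ) (T : ℝ) (hT : 0 < T) :
    ∃ C > 0, ∀ n : ℤ, n ≠ 0 → 4 * b * ρ ≤ μ ^ 2 * (n : ℝ) ^ 2 →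
      (∫ t in (0 : ℝ)..T,
        ‖Complex.exp (nuH ρ u b μ n * ((T : ℂ) - (t : ℂ)))
          - Complex.exp ((Complex.I * (u : ℂ) * (n : ℂ) - ((b * ρ / μ : ℝ) : ℂ))
              * ((T : ℂ) - (t : ℂ)))‖ ^ 2) ≤ C / (n : ℝ) ^ 2 := by
  set K := 4 * (b * ρ) ^ 2 / μ ^ 3
  refine ⟨K ^ 2 * T ^ 3, by positivity, fun n hn h => ?_⟩
  have hn1 : (1 : ℝ) ≤ (n : ℝ) ^ 2 := by
    exact_mod_cast (one_le_sq_iff_one_le_abs _).mpr (Int.one_le_abs hn)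
  obtain ⟨hneg, habs⟩ :=
    hyperbolicRe_add_bounds (mul_pos hb hρ) hμ (by rwa [← mul_assoc] : 4 * (b * ρ) ≤ _)
  have hω : 0 ≤ b * ρ / μ := by positivity
  have hdiff : nuH ρ u b μ n - (I * u * n - ((b * ρ / μ : ℝ) : ℂ))
      = ((hyperbolicRe (b * ρ) μ n + b * ρ / μ : ℝ) : ℂ) := by
    rw [nuH_eq_hyperbolicRe h]; push_cast; ring
  have hre : (nuH ρ u b μ n).re ≤ 0 := by
    simpa [nuH_eq_hyperbolicRe h] using (by linarith : hyperbolicRe (b * ρ) μ n ≤ 0)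
  calc _ ≤ ‖nuH ρ u b μ n - (I * u * n - ((b * ρ / μ : ℝ) : ℂ))‖ ^ 2 * T ^ 3 :=
        integral_norm_exp_mul_sub_exp_mul_sq_le hre (by simpa using hω) hT.le
    _ ≤ (K / (n : ℝ) ^ 2) ^ 2 * T ^ 3 := by
        rw [hdiff, norm_real, Real.norm_eq_abs]
        gcongr
        exact habs.trans_eq (by ring)
    _ ≤ K ^ 2 * T ^ 3 / (n : ℝ) ^ 2 := by
        rw [div_pow, div_mul_eq_mul_div]
        exact div_le_div_of_nonneg_left (by positivity) (by positivity)
          (le_self_pow₀ hn1 two_ne_zero)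

/-- Transport approximation of the hyperbolic modes: for each `T > 0` there is `C > 0`
such that for every nonzero `n` with `μ₀²n² ≥ 4bρ̄`,
`∫₀ᵀ |e^{ν_n^h(T−t)} − e^{(iūn − ω₀)(T−t)}|² dt ≤ C/n²`, where `ω₀ = bρ̄/μ₀`. -/
theorem transport_approximation (ρ u b μ : ℝ) (hρ : 0 < ρ) (hu : 0 < u) (hb : 0 < b)
    (hμ : 0 < μ) (T : ℝ) (hT : 0 < T) :
    ∃ C > 0, ∀ n : ℤ, n ≠ 0 → 4 * b * ρ ≤ μ ^ 2 * (n : ℝ) ^ 2 →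
      (∫ t in (0 : ℝ)..T,
        ‖Complex.exp (nuH ρ u b μ n * ((T : ℂ) - (t : ℂ)))
          - Complex.exp ((Complex.I * (u : ℂ) * (n : ℂ) - ((b * ρ / μ : ℝ) : ℂ))
              * ((T : ℂ) - (t : ℂ)))‖ ^ 2) ≤ C / (n : ℝ) ^ 2 :=
  transport_approximation_general ρ u b μ hρ hb hμ T hT
end
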